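/- arXiv:math/9404220 — 3 statements merged into one kernel-verified Lean document; each statement's English description precedes it below -/
import Mathlib

section
/- For every natural number n and every real x ≥ 0, L_n^{(−1/2)}(x) = ((−1)^n / (n! · 4^n)) · H_{2n}(√x). -/
/-- Generalized binomial coefficient `binom(a, m) = a(a-1)⋯(a-m+1)/m!` for real `a`. -/
noncomputable def genBinom (a : ℝ) (m : ℕ) : ℝ :=
  (∏ j ∈ Finset.range m, (a - j)) / (m.factorial : ℝ)

/-- Generalized Laguerre polynomial
`L_n^{(α)}(x) = Σ_{k=0}^n (−1)^k binom(n+α, n−k) x^k / k!`. -/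
noncomputable def laguerreL (n : ℕ) (α x : ℝ) : ℝ :=
  ∑ k ∈ Finset.range (n + 1),
    (-1) ^ k * genBinom ((n : ℝ) + α) (n - k) * x ^ k / (k.factorial : ℝ)

/-- Physicists' Hermite polynomial via the Rodrigues formula. -/
noncomputable def hermiteH (n : ℕ) (x : ℝ) : ℝ :=
  (-1) ^ n * Real.exp (x ^ 2) * iteratedDeriv n (fun y : ℝ => Real.exp (-y ^ 2)) x

lemma iteratedDeriv_comp_const_mul' (c : ℝ) (f : ℝ → ℝ) (hf : ContDiff ℝ ⊤ f) :
    ∀ (n : ℕ), iteratedDeriv n (fun y => f (c * y)) = fun x => c ^ n * iteratedDeriv n f (c * x) := by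
  intro n
  induction n with
  | zero => simp
  | succ n ih =>
    funext x
    rw [iteratedDeriv_succ, ih, iteratedDeriv_succ]
    have hF : DifferentiableAt ℝ (iteratedDeriv n f) (c * x) :=
      (hf.differentiable_iteratedDeriv n (by simp)).differentiableAt
    have h1 : HasDerivAt (fun y => iteratedDeriv n f (c * y))
        (deriv (iteratedDeriv n f) (c * x) * c) x :=
      HasDerivAt.comp x hF.hasDerivAt ((hasDerivAt_id x).const_mul c |>.congr_deriv (by ring))
    rw [deriv_const_mul _ h1.differentiableAt, h1.deriv]
    ring

lemma hermiteH_eq_aeval (m : ℕ) (x : ℝ) :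
    hermiteH m x = (Real.sqrt 2) ^ m * Polynomial.aeval (Real.sqrt 2 * x) (Polynomial.hermite m) := by
  have h2 : (Real.sqrt 2) ^ 2 = 2 := Real.sq_sqrt (by norm_num)
  have hg : ContDiff ℝ ⊤ (fun y : ℝ => Real.exp (-(y ^ 2 / 2))) := by
    apply Real.contDiff_exp.comp
    exact ((contDiff_id.pow 2).div_const 2).neg
  have hfun : (fun y : ℝ => Real.exp (-y ^ 2)) =
      (fun y : ℝ => Real.exp (-((Real.sqrt 2 * y) ^ 2 / 2))) := by
    funext y
    rw [mul_pow, h2]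
    ring_nf
  rw [hermiteH, hfun, iteratedDeriv_comp_const_mul' _ _ hg]
  beta_reduce
  rw [iteratedDeriv_eq_iterate, Polynomial.deriv_gaussian_eq_hermite_mul_gaussian]
  have hexp : Real.exp (x ^ 2) * Real.exp (-((Real.sqrt 2 * x) ^ 2 / 2)) = 1 := by
    rw [← Real.exp_add, mul_pow, h2]
    ring_nf
    exact Real.exp_zero
  calc (-1:ℝ) ^ m * Real.exp (x ^ 2) * ((Real.sqrt 2) ^ m *
        ((-1) ^ m * Polynomial.aeval (Real.sqrt 2 * x) (Polynomial.hermite m) *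
          Real.exp (-((Real.sqrt 2 * x) ^ 2 / 2))))
      = ((-1:ℝ) ^ m * (-1) ^ m) * (Real.exp (x ^ 2) * Real.exp (-((Real.sqrt 2 * x) ^ 2 / 2))) *
        ((Real.sqrt 2) ^ m * Polynomial.aeval (Real.sqrt 2 * x) (Polynomial.hermite m)) := by ring
    _ = _ := by rw [← pow_add, hexp, ← two_mul, pow_mul]; norm_num

lemma sum_even_only {M : Type*} [AddCommMonoid M] (n : ℕ) (f : ℕ → M) (hf : ∀ i, Odd i → f i = 0) :
    ∑ i ∈ Finset.range (2 * n + 1), f i = ∑ k ∈ Finset.range (n + 1), f (2 * k) := by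
  induction n with
  | zero => simp
  | succ n ih =>
    rw [show 2 * (n + 1) + 1 = (2 * n + 1) + 1 + 1 by ring, Finset.sum_range_succ,
      Finset.sum_range_succ, ih, hf (2 * n + 1) ⟨n, by ring⟩, add_zero,
      show 2 * n + 1 + 1 = 2 * (n + 1) by ring, Finset.sum_range_succ _ (n + 1)]

open Nat in
lemma aeval_hermite_two_mul (n : ℕ) (y : ℝ) :
    Polynomial.aeval y (Polynomial.hermite (2 * n)) =
      ∑ k ∈ Finset.range (n + 1),
        ((-1 : ℝ) ^ (n - k) * ((2 * (n - k) - 1)‼ : ℕ) * ((2 * n).choose (2 * k) : ℕ)) * y ^ (2 * k) := by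
  rw [Polynomial.aeval_eq_sum_range]
  rw [Polynomial.natDegree_hermite]
  rw [sum_even_only n _ (fun i hi => by
    obtain ⟨j, hj⟩ := hi
    rw [Polynomial.coeff_hermite_of_odd_add ⟨n + j, by omega⟩]
    simp)]
  refine Finset.sum_congr rfl fun k hk => ?_
  have hk' : k ≤ n := Nat.lt_succ_iff.mp (Finset.mem_range.mp hk)
  rw [show 2 * n = 2 * (n - k) + 2 * k by omega, Polynomial.coeff_hermite_explicit (n - k) (2 * k)]
  rw [zsmul_eq_mul]
  push_cast
  ring

open Nat in
lemma two_mul_factorial_eq (m : ℕ) : (2 * m)! = 2 ^ m * m ! * (2 * m - 1)‼ := by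
  cases m with
  | zero => rfl
  | succ m =>
    rw [show 2 * (m + 1) = 2 * m + 1 + 1 by ring, Nat.factorial_eq_mul_doubleFactorial,
      show 2 * m + 1 + 1 = 2 * (m + 1) by ring, Nat.doubleFactorial_two_mul,
      show 2 * (m + 1) - 1 = 2 * m + 1 by omega]

lemma prod_half (n m : ℕ) (h : m ≤ n) :
    ∏ j ∈ Finset.range m, ((n : ℝ) - 1/2 - j) =
      ((2 * n).factorial : ℝ) * ((n - m).factorial : ℝ) /
        (((2 * (n - m)).factorial : ℝ) * (n.factorial : ℝ) * 4 ^ m) := by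
  induction m with
  | zero =>
    rw [Finset.prod_range_zero, Nat.sub_zero, pow_zero, mul_one,
      div_self (by positivity)]
  | succ m ih =>
    have hm : m ≤ n := Nat.le_of_succ_le h
    rw [Finset.prod_range_succ, ih hm]
    obtain ⟨t, ht⟩ : ∃ t, n - m = t + 1 := ⟨n - m - 1, by omega⟩
    have h1 : n - (m + 1) = t := by omega
    have h2 : (n : ℝ) - m = t + 1 := by
      have := Nat.cast_sub hm (R := ℝ)
      rw [ht] at this
      push_cast at this ⊢
      linarith
    rw [ht, h1]
    have h3 : ((n : ℝ) - 1/2 - m) = (2 * t + 1) / 2 := by linarith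
    have h4 : (((2 * (t + 1)).factorial : ℕ) : ℝ) =
        (2 * t + 2) * (2 * t + 1) * ((2 * t).factorial : ℕ) := by
      rw [show 2 * (t + 1) = 2 * t + 1 + 1 by ring, Nat.factorial_succ, Nat.factorial_succ]
      push_cast
      ring
    have h5 : (((t + 1).factorial : ℕ) : ℝ) = (t + 1) * (t.factorial : ℕ) := by
      rw [Nat.factorial_succ]; push_cast; ring
    rw [h3, h4, h5]
    have e1 : ((2 * t).factorial : ℝ) ≠ 0 := by positivity
    have e2 : (n.factorial : ℝ) ≠ 0 := by positivity
    have e3 : ((t : ℝ) + 1) ≠ 0 := by positivity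
    field_simp
    ring


theorem laguerre_hermite_identity (n : ℕ) (x : ℝ) (hx : 0 ≤ x) :
    laguerreL n (-1/2) x =
      ((-1) ^ n / ((n.factorial : ℝ) * 4 ^ n)) * hermiteH (2 * n) (Real.sqrt x) := by
  have h2 : (Real.sqrt 2) ^ 2 = 2 := Real.sq_sqrt (by norm_num)
  rw [laguerreL, hermiteH_eq_aeval, aeval_hermite_two_mul, Finset.mul_sum, Finset.mul_sum]
  refine Finset.sum_congr rfl fun k hk => ?_
  have hk' : k ≤ n := Nat.lt_succ_iff.mp (Finset.mem_range.mp hk)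
  obtain ⟨m, rfl⟩ : ∃ m, n = m + k := ⟨n - k, by omega⟩
  have hmk : m + k - k = m := by omega
  rw [hmk, genBinom]
  have hprod : ∏ j ∈ Finset.range m, (((m + k : ℕ) : ℝ) + (-1/2) - j) =
      ((2 * (m + k)).factorial : ℝ) * (k.factorial : ℝ) /
        (((2 * k).factorial : ℝ) * ((m + k).factorial : ℝ) * 4 ^ m) := by
    have := prod_half (m + k) m (by omega)
    rw [show m + k - m = k by omega] at this
    rw [← this]
    refine Finset.prod_congr rfl fun j _ => ?_
    push_cast
    ring
  rw [hprod]
  -- powers of sqrt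
  have hs2 : (Real.sqrt 2) ^ (2 * (m + k)) = 2 ^ (m + k) := by
    rw [pow_mul, h2]
  have hsx : (Real.sqrt 2 * Real.sqrt x) ^ (2 * k) = (2 * x) ^ k := by
    rw [pow_mul, mul_pow, h2, Real.sq_sqrt hx]
  rw [hs2, hsx]
  -- double factorial
  have hdf : (((2 * m - 1).doubleFactorial : ℕ) : ℝ) = ((2 * m).factorial : ℝ) / (2 ^ m * (m.factorial : ℝ)) := by
    rw [eq_div_iff (by positivity), two_mul_factorial_eq]
    push_cast
    ring
  rw [hdf]
  -- choose
  have hch : (((2 * (m + k)).choose (2 * k) : ℕ) : ℝ) =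
      ((2 * (m + k)).factorial : ℝ) / (((2 * k).factorial : ℝ) * ((2 * m).factorial : ℝ)) := by
    rw [Nat.cast_choose ℝ (by omega : 2 * k ≤ 2 * (m + k)), show 2 * (m + k) - 2 * k = 2 * m by omega]
  rw [hch]
  -- signs
  have hsign : ((-1 : ℝ)) ^ (m + k) * (-1) ^ m = (-1) ^ k * ((-1) ^ m * (-1) ^ m) := by
    rw [pow_add]; ring
  have hmm : ((-1 : ℝ)) ^ m * (-1) ^ m = 1 := by
    rw [← pow_add, ← two_mul, pow_mul]; norm_num
  have e1 : ((2 * k).factorial : ℝ) ≠ 0 := by positivity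
  have e2 : ((m + k).factorial : ℝ) ≠ 0 := by positivity
  have e3 : (k.factorial : ℝ) ≠ 0 := by positivity
  have e4 : ((2 * m).factorial : ℝ) ≠ 0 := by positivity
  have e5 : (m.factorial : ℝ) ≠ 0 := by positivity
  field_simp
  ring_nf
  rw [show ((-1 : ℝ)) ^ (m * 2) = 1 by rw [pow_mul']; norm_num,
    show (2 : ℝ) ^ (k * 2) = 4 ^ k by rw [pow_mul']; norm_num]
  ring
end

section
/- The Bateman functions F_n(x) = (−1)^n e^{−x}(L_n(2x) − L_{n−1}(2x)) satisfy the differential equation x·F_n''(x) + (2n − x)·F_n(x) = 0 for all n ≥ 1 and all real x. -/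
/-!
With `y = 2x`, the function `G = L_n - L_{n-1}` is the associated Laguerre polynomial
`L_n^{(-1)}`, which solves `y G'' - y G' + n G = 0`; this follows from the classical identities
`L_{n+1}' = L_n' - L_n` and `y L_{n+1}' = (n+1)(L_{n+1} - L_n)`. Conjugating by `e^{-x}` turns
this equation into `x F'' + (2n - x) F = 0`, since
`(e^{-x} G(2x))'' = e^{-x} (4 G''(2x) - 4 G'(2x) + G(2x))`.
-/

/-- Laguerre polynomial `L_n(x) = Σ_{k=0}^n (−1)^k binom(n,k) x^k / k!`. -/
noncomputable def lagL (n : ℕ) (x : ℝ) : ℝ :=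
  ∑ k ∈ Finset.range (n + 1), (-1) ^ k * (n.choose k : ℝ) * x ^ k / (k.factorial : ℝ)

/-- Bateman function `F_n(x) = (−1)^n e^{−x}(L_n(2x) − L_{n−1}(2x))`, with the
convention `L_{−1} = 0`, so that `F_0(x) = e^{−x}`. -/
noncomputable def batemanF (n : ℕ) (x : ℝ) : ℝ :=
  if n = 0 then Real.exp (-x)
  else (-1) ^ n * Real.exp (-x) * (lagL n (2 * x) - lagL (n - 1) (2 * x))

open Polynomial Finset Real

noncomputable def laguerre (n : ℕ) : ℝ[X] :=
  ∑ k ∈ range (n + 1), C ((-1) ^ k * n.choose k / k.factorial : ℝ) * X ^ k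

theorem coeff_laguerre (n k : ℕ) :
    (laguerre n).coeff k = (-1) ^ k * n.choose k / k.factorial := by
  simp only [laguerre, finsetSum_coeff, coeff_C_mul_X_pow, sum_ite_eq, mem_range]
  split_ifs with hk
  · rfl
  · simp [Nat.choose_eq_zero_of_lt (by omega : n < k)]

theorem eval_laguerre (n : ℕ) (x : ℝ) : (laguerre n).eval x = lagL n x := by
  simp only [laguerre, lagL, eval_finsetSum, eval_mul, eval_C, eval_pow, eval_X]
  exact sum_congr rfl fun k _ => by ring

theorem derivative_laguerre_succ (n : ℕ) :
    derivative (laguerre (n + 1)) = derivative (laguerre n) - laguerre n := by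
  ext k
  simp only [coeff_derivative, coeff_sub, coeff_laguerre, Nat.choose_succ_succ',
    Nat.factorial_succ]
  push_cast
  field_simp
  ring

theorem X_mul_derivative_laguerre_succ (n : ℕ) :
    X * derivative (laguerre (n + 1)) = C ((n : ℝ) + 1) * (laguerre (n + 1) - laguerre n) := by
  ext (_ | k)
  · simp [coeff_laguerre]
  · have h : ((n : ℝ) + 1) * n.choose k = (n.choose k + n.choose (k + 1)) * (k + 1) := by
      exact_mod_cast Nat.choose_succ_succ' n k ▸ Nat.add_one_mul_choose_eq n k
    simp only [coeff_X_mul, coeff_derivative, coeff_C_mul, coeff_sub, coeff_laguerre,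
      Nat.choose_succ_succ', Nat.factorial_succ]
    push_cast
    field_simp
    linear_combination -h

theorem laguerre_succ_sub_laguerre_ode (n : ℕ) :
    let G := laguerre (n + 1) - laguerre n
    X * derivative (derivative G) - X * derivative G + C ((n : ℝ) + 1) * G = 0 := by
  intro G
  have h1 := derivative_laguerre_succ n
  have h2 := X_mul_derivative_laguerre_succ n
  have h1' := congrArg derivative h1
  simp only [G, derivative_sub] at h1' ⊢
  linear_combination X * h1' - h2

theorem hasDerivAt_mul_exp_neg_mul_comp_two_mul {G G' : ℝ → ℝ}
    (hG : ∀ y, HasDerivAt G (G' y) y) (c x : ℝ) :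
    HasDerivAt (fun x => c * exp (-x) * G (2 * x))
      (c * exp (-x) * (2 * G' (2 * x) - G (2 * x))) x := by
  have h2 : HasDerivAt (fun x : ℝ => 2 * x) 2 x := by
    simpa using (hasDerivAt_id x).const_mul 2
  exact (((hasDerivAt_neg x).exp.const_mul c).mul ((hG (2 * x)).comp x h2)).congr_deriv
    (by simp only [Function.comp_apply]; ring)

theorem iteratedDeriv_two_mul_exp_neg_mul_comp_two_mul {G G' G'' : ℝ → ℝ}
    (hG : ∀ y, HasDerivAt G (G' y) y) (hG' : ∀ y, HasDerivAt G' (G'' y) y) (c x : ℝ) :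
    iteratedDeriv 2 (fun x => c * exp (-x) * G (2 * x)) x =
      c * exp (-x) * (4 * G'' (2 * x) - 4 * G' (2 * x) + G (2 * x)) := by
  have hG₁ : ∀ y, HasDerivAt (fun y => 2 * G' y - G y) (2 * G'' y - G' y) y :=
    fun y => ((hG' y).const_mul 2).sub (hG y)
  rw [iteratedDeriv_succ, iteratedDeriv_one,
    funext fun x => (hasDerivAt_mul_exp_neg_mul_comp_two_mul hG c x).deriv,
    (hasDerivAt_mul_exp_neg_mul_comp_two_mul hG₁ c x).deriv]
  ring

theorem bateman_differential_equation (n : ℕ) (hn : 1 ≤ n) (x : ℝ) :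
    x * iteratedDeriv 2 (batemanF n) x + (2 * (n : ℝ) - x) * batemanF n x = 0 := by
  obtain ⟨m, rfl⟩ : ∃ m, n = m + 1 := ⟨n - 1, by omega⟩
  have hG := congrArg (eval (2 * x)) (laguerre_succ_sub_laguerre_ode m)
  set G := laguerre (m + 1) - laguerre m
  simp only [eval_add, eval_sub, eval_mul, eval_X, eval_C, eval_zero] at hG
  have hF : batemanF (m + 1) = fun x => (-1) ^ (m + 1) * exp (-x) * G.eval (2 * x) := by
    funext x
    simp [batemanF, G, eval_laguerre]
  rw [hF, iteratedDeriv_two_mul_exp_neg_mul_comp_two_mul (fun y => G.hasDerivAt y)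
    (fun y => G.derivative.hasDerivAt y)]
  push_cast
  linear_combination (2 * (-1) ^ (m + 1) * exp (-x)) * hG
end

section
/- The sequence t_n = Σ_{k=0}^n binom(n,k)³ satisfies the second-order recurrence 8(n+1)²·t_n + (7n² + 21n + 16)·t_{n+1} − (n+2)²·t_{n+2} = 0 for all n ≥ 0. -/
set_option maxHeartbeats 1000000

noncomputable def franelH (n k : ℕ) : ℚ :=
  (k : ℚ) ^ 3 * ((n : ℚ) + 1) *
    ((2 * ((n : ℚ) + 2) * (7 * (n : ℚ) + 9) - (13 * (n : ℚ) + 17) * (k : ℚ)) *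
        ((n + 2).choose k : ℚ) ^ 3 -
      2 * (k : ℚ) * (5 * (n : ℚ) + 7) * ((n + 1).choose k : ℚ) * ((n + 2).choose k : ℚ) ^ 2 -
      4 * (k : ℚ) * ((n : ℚ) + 2) * ((n + 1).choose k : ℚ) ^ 2 * ((n + 2).choose k : ℚ))

lemma franel_key (n k : ℕ) :
    ((n : ℚ) + 1) ^ 2 * ((n : ℚ) + 2) ^ 2 *
      (8 * ((n : ℚ) + 1) ^ 2 * (n.choose k : ℚ) ^ 3 +
        (7 * (n : ℚ) ^ 2 + 21 * (n : ℚ) + 16) * ((n + 1).choose k : ℚ) ^ 3 -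
        ((n : ℚ) + 2) ^ 2 * ((n + 2).choose k : ℚ) ^ 3) =
    franelH n (k + 1) - franelH n k := by
  rcases le_or_gt k n with hk | hk
  · -- generic case k ≤ n
    obtain ⟨d, rfl⟩ : ∃ d, n = k + d := ⟨n - k, by omega⟩
    have hA : ((k.factorial : ℚ)) ≠ 0 := Nat.cast_ne_zero.2 k.factorial_ne_zero
    have hB : ((d.factorial : ℚ)) ≠ 0 := Nat.cast_ne_zero.2 d.factorial_ne_zero
    have hk1 : ((k : ℚ) + 1) ≠ 0 := by positivity
    have hd1 : ((d : ℚ) + 1) ≠ 0 := by positivity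
    have hd2 : ((d : ℚ) + 2) ≠ 0 := by positivity
    have c1 := Nat.choose_mul_factorial_mul_factorial (show k ≤ k + d by omega)
    have c2 := Nat.choose_mul_factorial_mul_factorial (show k ≤ k + d + 1 by omega)
    have c3 := Nat.choose_mul_factorial_mul_factorial (show k ≤ k + d + 2 by omega)
    have c4 := Nat.choose_mul_factorial_mul_factorial (show k + 1 ≤ k + d + 1 by omega)
    have c5 := Nat.choose_mul_factorial_mul_factorial (show k + 1 ≤ k + d + 2 by omega)
    rw [show k + d - k = d by omega] at c1
    rw [show k + d + 1 - k = d + 1 by omega] at c2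
    rw [show k + d + 2 - k = d + 2 by omega] at c3
    rw [show k + d + 1 - (k + 1) = d by omega] at c4
    rw [show k + d + 2 - (k + 1) = d + 1 by omega] at c5
    have q1 := congrArg (Nat.cast : ℕ → ℚ) c1
    have q2 := congrArg (Nat.cast : ℕ → ℚ) c2
    have q3 := congrArg (Nat.cast : ℕ → ℚ) c3
    have q4 := congrArg (Nat.cast : ℕ → ℚ) c4
    have q5 := congrArg (Nat.cast : ℕ → ℚ) c5
    push_cast [Nat.factorial_succ] at q1 q2 q3 q4 q5
    set W : ℚ := ((k + d).factorial : ℚ) with hW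
    set A : ℚ := (k.factorial : ℚ) with hAdef
    set B : ℚ := (d.factorial : ℚ) with hBdef
    have hD : (A * B * (((d : ℚ) + 1) * (((d : ℚ) + 2) * ((k : ℚ) + 1)))) ≠ 0 := by positivity
    set u : ℚ := W / (A * B * (((d : ℚ) + 1) * (((d : ℚ) + 2) * ((k : ℚ) + 1)))) with hu
    have ea : ((k + d).choose k : ℚ) =
        ((d : ℚ) + 1) * (((d : ℚ) + 2) * ((k : ℚ) + 1)) * u := by
      rw [hu, ← mul_div_assoc, eq_div_iff hD]
      linear_combination (((d:ℚ)+1) * (((d:ℚ)+2) * ((k:ℚ)+1))) * q1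
    have eb : ((k + d + 1).choose k : ℚ) =
        ((k : ℚ) + d + 1) * (((d : ℚ) + 2) * ((k : ℚ) + 1)) * u := by
      rw [hu, ← mul_div_assoc, eq_div_iff hD]
      linear_combination ((((d:ℚ)+2) * ((k:ℚ)+1))) * q2
    have ec : ((k + d + 2).choose k : ℚ) =
        ((k : ℚ) + d + 2) * (((k : ℚ) + d + 1) * ((k : ℚ) + 1)) * u := by
      rw [hu, ← mul_div_assoc, eq_div_iff hD]
      linear_combination (((k:ℚ)+1)) * q3
    have eb' : ((k + d + 1).choose (k + 1) : ℚ) =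
        ((k : ℚ) + d + 1) * (((d : ℚ) + 1) * ((d : ℚ) + 2)) * u := by
      rw [hu, ← mul_div_assoc, eq_div_iff hD]
      linear_combination ((((d:ℚ)+1) * ((d:ℚ)+2))) * q4
    have ec' : ((k + d + 2).choose (k + 1) : ℚ) =
        ((k : ℚ) + d + 2) * (((k : ℚ) + d + 1) * ((d : ℚ) + 2)) * u := by
      rw [hu, ← mul_div_assoc, eq_div_iff hD]
      linear_combination (((d:ℚ)+2)) * q5
    simp only [franelH]
    push_cast
    rw [ea, eb, ec, eb', ec']
    ring
  · -- k > n
    have e1 : ∀ m l : ℕ, m < l → (m.choose l : ℚ) = 0 := fun m l h => by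
      simp [Nat.choose_eq_zero_of_lt h]
    rcases (show k = n + 1 ∨ k = n + 2 ∨ n + 3 ≤ k by omega) with rfl | rfl | hk3
    · have h1 : (n.choose (n + 1) : ℚ) = 0 := e1 _ _ (by omega)
      have h2 : ((n + 1).choose (n + 1) : ℚ) = 1 := by simp
      have h3 : ((n + 2).choose (n + 1) : ℚ) = (n : ℚ) + 2 := by
        rw [show n + 2 = (n + 1) + 1 from rfl, Nat.choose_succ_self_right]
        push_cast; ring
      have h4 : ((n + 1).choose (n + 1 + 1) : ℚ) = 0 := e1 _ _ (by omega)
      have h5 : ((n + 2).choose (n + 1 + 1) : ℚ) = 1 := by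
        rw [show n + 1 + 1 = n + 2 from rfl]; simp
      simp only [franelH, h1, h2, h3, h4, h5]
      push_cast; ring
    · have h1 : (n.choose (n + 2) : ℚ) = 0 := e1 _ _ (by omega)
      have h2 : ((n + 1).choose (n + 2) : ℚ) = 0 := e1 _ _ (by omega)
      have h3 : ((n + 2).choose (n + 2) : ℚ) = 1 := by simp
      have h4 : ((n + 1).choose (n + 2 + 1) : ℚ) = 0 := e1 _ _ (by omega)
      have h5 : ((n + 2).choose (n + 2 + 1) : ℚ) = 0 := e1 _ _ (by omega)
      simp only [franelH, h1, h2, h3, h4, h5]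
      push_cast; ring
    · have h1 : (n.choose k : ℚ) = 0 := e1 _ _ (by omega)
      have h2 : ((n + 1).choose k : ℚ) = 0 := e1 _ _ (by omega)
      have h3 : ((n + 2).choose k : ℚ) = 0 := e1 _ _ (by omega)
      have h4 : ((n + 1).choose (k + 1) : ℚ) = 0 := e1 _ _ (by omega)
      have h5 : ((n + 2).choose (k + 1) : ℚ) = 0 := e1 _ _ (by omega)
      simp only [franelH, h1, h2, h3, h4, h5]
      ring

lemma franelH_zero (n : ℕ) : franelH n 0 = 0 := by simp [franelH]

lemma franelH_top (n : ℕ) : franelH n (n + 3) = 0 := by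
  have h : ((n + 2).choose (n + 3) : ℚ) = 0 := by
    simp [Nat.choose_eq_zero_of_lt (show n + 2 < n + 3 by omega)]
  simp only [franelH, h]
  ring

theorem franel_recurrence (n : ℕ) :
    (8 * ((n : ℤ) + 1) ^ 2) * (∑ k ∈ Finset.range (n + 1), (n.choose k : ℤ) ^ 3) +
      (7 * (n : ℤ) ^ 2 + 21 * (n : ℤ) + 16) *
        (∑ k ∈ Finset.range (n + 2), ((n + 1).choose k : ℤ) ^ 3) -
      ((n : ℤ) + 2) ^ 2 * (∑ k ∈ Finset.range (n + 3), ((n + 2).choose k : ℤ) ^ 3) = 0 := by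
  qify
  have ext1 : (∑ k ∈ Finset.range (n + 1), (n.choose k : ℚ) ^ 3)
      = ∑ k ∈ Finset.range (n + 3), (n.choose k : ℚ) ^ 3 := by
    apply Finset.sum_subset (Finset.range_subset_range.mpr (show n + 1 ≤ n + 3 by omega))
    intro x _ hx
    simp only [Finset.mem_range, not_lt] at hx
    simp [Nat.choose_eq_zero_of_lt (show n < x by omega)]
  have ext2 : (∑ k ∈ Finset.range (n + 2), ((n + 1).choose k : ℚ) ^ 3)
      = ∑ k ∈ Finset.range (n + 3), ((n + 1).choose k : ℚ) ^ 3 := by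
    apply Finset.sum_subset (Finset.range_subset_range.mpr (show n + 2 ≤ n + 3 by omega))
    intro x _ hx
    simp only [Finset.mem_range, not_lt] at hx
    simp [Nat.choose_eq_zero_of_lt (show n + 1 < x by omega)]
  have tele : ∑ k ∈ Finset.range (n + 3), (franelH n (k + 1) - franelH n k)
      = franelH n (n + 3) - franelH n 0 := Finset.sum_range_sub (franelH n) (n + 3)
  have keysum : ∑ k ∈ Finset.range (n + 3),
      (((n : ℚ) + 1) ^ 2 * ((n : ℚ) + 2) ^ 2 *
        (8 * ((n : ℚ) + 1) ^ 2 * (n.choose k : ℚ) ^ 3 +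
          (7 * (n : ℚ) ^ 2 + 21 * (n : ℚ) + 16) * ((n + 1).choose k : ℚ) ^ 3 -
          ((n : ℚ) + 2) ^ 2 * ((n + 2).choose k : ℚ) ^ 3)) = 0 := by
    rw [Finset.sum_congr rfl (fun k _ => franel_key n k), tele, franelH_zero, franelH_top]
    ring
  have hne : (((n : ℚ) + 1) ^ 2 * ((n : ℚ) + 2) ^ 2) ≠ 0 := by positivity
  have split : ∑ k ∈ Finset.range (n + 3),
      (((n : ℚ) + 1) ^ 2 * ((n : ℚ) + 2) ^ 2 *
        (8 * ((n : ℚ) + 1) ^ 2 * (n.choose k : ℚ) ^ 3 +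
          (7 * (n : ℚ) ^ 2 + 21 * (n : ℚ) + 16) * ((n + 1).choose k : ℚ) ^ 3 -
          ((n : ℚ) + 2) ^ 2 * ((n + 2).choose k : ℚ) ^ 3))
      = ((n : ℚ) + 1) ^ 2 * ((n : ℚ) + 2) ^ 2 * (8 * ((n : ℚ) + 1) ^ 2) *
          (∑ k ∈ Finset.range (n + 3), (n.choose k : ℚ) ^ 3) +
        ((n : ℚ) + 1) ^ 2 * ((n : ℚ) + 2) ^ 2 * (7 * (n : ℚ) ^ 2 + 21 * (n : ℚ) + 16) *
          (∑ k ∈ Finset.range (n + 3), ((n + 1).choose k : ℚ) ^ 3) -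
        ((n : ℚ) + 1) ^ 2 * ((n : ℚ) + 2) ^ 2 * ((n : ℚ) + 2) ^ 2 *
          (∑ k ∈ Finset.range (n + 3), ((n + 2).choose k : ℚ) ^ 3) := by
    rw [Finset.mul_sum, Finset.mul_sum, Finset.mul_sum, ← Finset.sum_add_distrib,
      ← Finset.sum_sub_distrib]
    exact Finset.sum_congr rfl fun k _ => by ring
  have keysum2 := split.symm.trans keysum
  have main : ((n : ℚ) + 1) ^ 2 * ((n : ℚ) + 2) ^ 2 *
      ((8 * ((n : ℚ) + 1) ^ 2) * (∑ k ∈ Finset.range (n + 1), (n.choose k : ℚ) ^ 3) +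
        (7 * (n : ℚ) ^ 2 + 21 * (n : ℚ) + 16) *
          (∑ k ∈ Finset.range (n + 2), ((n + 1).choose k : ℚ) ^ 3) -
        ((n : ℚ) + 2) ^ 2 * (∑ k ∈ Finset.range (n + 3), ((n + 2).choose k : ℚ) ^ 3)) = 0 := by
    rw [ext1, ext2]
    linear_combination keysum2
  have := mul_eq_zero.mp main
  rcases this with h | h
  · exact absurd h hne
  · convert h using 2
end
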